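/- arXiv:1906.02056 — 5 statements merged into one kernel-verified Lean document; each statement's English description precedes it below -/
import Mathlib

section
/- Let G be a (small) groupoid and let M ⊆ (Arr(G) × Arr(G)) × Arr(G) be the composition relation, M((a,b),c) ⇔ (a,b are composable and a ∘ b = c), and U ⊆ 1 × Arr(G) the relation picking out the identity arrows. Then (Arr(G), M, U) is a special dagger Frobenius monoid in Rel: M is associative with unit U, satisfies speciality M ∘ M° = id, and satisfies the Frobenius law (M × id) ∘ (id × M°) = (id × M) ∘ (M° × id) as relations. -/
open CategoryTheory

/-- The total set of arrows of a groupoid. -/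
def Arr (G : Type*) [Groupoid G] := Σ x y : G, x ⟶ y

/-- The composition relation of a groupoid, as a relation `(Arr G × Arr G) ⇸ Arr G`:
`M a b c` iff `a` and `b` are composable and `a ∘ b = c`. -/
def GpdMul (G : Type*) [Groupoid G] : Arr G → Arr G → Arr G → Prop :=
  fun a b c => ∃ (x y z : G) (f : y ⟶ z) (g : x ⟶ y),
    a = ⟨y, z, f⟩ ∧ b = ⟨x, y, g⟩ ∧ c = ⟨x, z, g ≫ f⟩

/-- The relation `1 ⇸ Arr G` picking out identity arrows. -/
def GpdUnit (G : Type*) [Groupoid G] : Arr G → Prop :=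
  fun a => ∃ x : G, a = ⟨x, x, 𝟙 x⟩

/-!
Composition in a groupoid is a partial function, defined exactly on composable pairs, so
associativity and unitality of `GpdMul` are the category laws. Speciality holds because this
partial function is single-valued and every arrow factors as `f ∘ id`. For the Frobenius law the
witness is `e⁻¹`: in a groupoid `a ∘ e = c` holds iff `c ∘ e⁻¹ = a`, and `e ∘ d = b` iff
`e⁻¹ ∘ b = d`.
-/

section GpdMul

variable {G : Type*} [Groupoid G]

def Arr.inv (a : Arr G) : Arr G := ⟨a.2.1, a.1, Groupoid.inv a.2.2⟩

theorem gpdMul_mk {x y z : G} (f : y ⟶ z) (g : x ⟶ y) :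
    GpdMul G ⟨y, z, f⟩ ⟨x, y, g⟩ ⟨x, z, g ≫ f⟩ :=
  ⟨x, y, z, f, g, rfl, rfl, rfl⟩

theorem gpdMul_mk_left_iff {y z : G} (f : y ⟶ z) (b c : Arr G) :
    GpdMul G ⟨y, z, f⟩ b c ↔ ∃ (x : G) (g : x ⟶ y), b = ⟨x, y, g⟩ ∧ c = ⟨x, z, g ≫ f⟩ := by
  constructor
  · rintro ⟨x, _, _, _, g, ⟨⟩, rfl, rfl⟩
    exact ⟨x, g, rfl, rfl⟩
  · rintro ⟨x, g, rfl, rfl⟩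
    exact gpdMul_mk f g

theorem gpdMul_mk_right_iff {x y : G} (g : x ⟶ y) (a c : Arr G) :
    GpdMul G a ⟨x, y, g⟩ c ↔ ∃ (z : G) (f : y ⟶ z), a = ⟨y, z, f⟩ ∧ c = ⟨x, z, g ≫ f⟩ := by
  constructor
  · rintro ⟨_, _, z, f, _, rfl, ⟨⟩, rfl⟩
    exact ⟨z, f, rfl, rfl⟩
  · rintro ⟨z, f, rfl, rfl⟩
    exact gpdMul_mk f g

theorem gpdMul_id_left_iff (w : G) (b c : Arr G) :
    GpdMul G ⟨w, w, 𝟙 w⟩ b c ↔ b.2.1 = w ∧ c = b := by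
  rw [gpdMul_mk_left_iff]
  constructor
  · rintro ⟨x, g, rfl, rfl⟩
    exact ⟨rfl, by rw [Category.comp_id]⟩
  · rintro ⟨rfl, rfl⟩
    exact ⟨c.1, c.2.2, rfl, by rw [Category.comp_id]; rfl⟩

theorem gpdMul_id_right_iff (w : G) (a c : Arr G) :
    GpdMul G a ⟨w, w, 𝟙 w⟩ c ↔ a.1 = w ∧ c = a := by
  rw [gpdMul_mk_right_iff]
  constructor
  · rintro ⟨z, f, rfl, rfl⟩
    exact ⟨rfl, by rw [Category.id_comp]⟩
  · rintro ⟨rfl, rfl⟩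
    exact ⟨c.2.1, c.2.2, rfl, by rw [Category.id_comp]; rfl⟩

theorem GpdMul.right_unique {a b c c' : Arr G} (h : GpdMul G a b c) (h' : GpdMul G a b c') :
    c = c' := by
  obtain ⟨x, y, z, f, g, rfl, rfl, rfl⟩ := h
  obtain ⟨x', g', ⟨⟩, rfl⟩ := (gpdMul_mk_left_iff f _ _).1 h'
  rfl

theorem GpdMul.inv_right {a b c : Arr G} (h : GpdMul G a b c) : GpdMul G c b.inv a := by
  obtain ⟨x, y, z, f, g, rfl, rfl, rfl⟩ := h
  simpa [Arr.inv] using gpdMul_mk (g ≫ f) (Groupoid.inv g)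

theorem GpdMul.inv_left {a b c : Arr G} (h : GpdMul G a b c) : GpdMul G a.inv c b := by
  obtain ⟨x, y, z, f, g, rfl, rfl, rfl⟩ := h
  simpa [Arr.inv] using gpdMul_mk (Groupoid.inv f) (g ≫ f)

theorem gpdMul_assoc (a b c d : Arr G) :
    (∃ e, GpdMul G a b e ∧ GpdMul G e c d) ↔ (∃ e, GpdMul G a e d ∧ GpdMul G b c e) := by
  constructor
  · rintro ⟨e, ⟨x, y, z, f, g, rfl, rfl, rfl⟩, h⟩
    obtain ⟨w, k, rfl, rfl⟩ := (gpdMul_mk_left_iff _ _ _).1 h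
    exact ⟨⟨w, y, k ≫ g⟩, by simpa using gpdMul_mk f (k ≫ g), gpdMul_mk g k⟩
  · rintro ⟨e, h, ⟨x, y, z, f, g, rfl, rfl, rfl⟩⟩
    obtain ⟨w, k, rfl, rfl⟩ := (gpdMul_mk_right_iff _ _ _).1 h
    exact ⟨⟨y, w, f ≫ k⟩, gpdMul_mk k f, by simpa using gpdMul_mk (f ≫ k) g⟩

theorem gpdMul_unit_left (a a' : Arr G) : (∃ u, GpdUnit G u ∧ GpdMul G u a a') ↔ a = a' := by
  constructor
  · rintro ⟨_, ⟨w, rfl⟩, h⟩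
    exact ((gpdMul_id_left_iff w a a').1 h).2.symm
  · rintro rfl
    exact ⟨_, ⟨a.2.1, rfl⟩, (gpdMul_id_left_iff _ _ _).2 ⟨rfl, rfl⟩⟩

theorem gpdMul_unit_right (a a' : Arr G) : (∃ u, GpdUnit G u ∧ GpdMul G a u a') ↔ a = a' := by
  constructor
  · rintro ⟨_, ⟨w, rfl⟩, h⟩
    exact ((gpdMul_id_right_iff w a a').1 h).2.symm
  · rintro rfl
    exact ⟨_, ⟨a.1, rfl⟩, (gpdMul_id_right_iff _ _ _).2 ⟨rfl, rfl⟩⟩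

theorem gpdMul_special (a a' : Arr G) : (∃ b c, GpdMul G b c a ∧ GpdMul G b c a') ↔ a = a' := by
  constructor
  · rintro ⟨b, c, h, h'⟩
    exact h.right_unique h'
  · rintro rfl
    have h := (gpdMul_id_right_iff a.1 a a).2 ⟨rfl, rfl⟩
    exact ⟨a, _, h, h⟩

theorem gpdMul_frobenius (a b c d : Arr G) :
    (∃ e, GpdMul G a e c ∧ GpdMul G e d b) ↔ (∃ e, GpdMul G c e a ∧ GpdMul G e b d) :=
  ⟨fun ⟨e, h, h'⟩ => ⟨e.inv, h.inv_right, h'.inv_left⟩,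
    fun ⟨e, h, h'⟩ => ⟨e.inv, h.inv_right, h'.inv_left⟩⟩

end GpdMul

/-- For any groupoid `G`, the set of arrows with the composition relation and the
unit relation forms a special dagger Frobenius monoid in `Rel`: associativity,
unitality, speciality and the Frobenius law hold (stated elementwise). -/
theorem stmt1 (G : Type*) [Groupoid G] :
    (∀ a b c d : Arr G,
      (∃ e, GpdMul G a b e ∧ GpdMul G e c d) ↔ (∃ e, GpdMul G a e d ∧ GpdMul G b c e)) ∧
    (∀ a a' : Arr G, (∃ x, GpdUnit G x ∧ GpdMul G x a a') ↔ a = a') ∧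
    (∀ a a' : Arr G, (∃ x, GpdUnit G x ∧ GpdMul G a x a') ↔ a = a') ∧
    (∀ a a' : Arr G, (∃ b c, GpdMul G b c a ∧ GpdMul G b c a') ↔ a = a') ∧
    (∀ a b c d : Arr G,
      (∃ e, GpdMul G a e c ∧ GpdMul G e d b) ↔ (∃ e, GpdMul G c e a ∧ GpdMul G e b d)) :=
  ⟨gpdMul_assoc, gpdMul_unit_left, gpdMul_unit_right, gpdMul_special, gpdMul_frobenius⟩
end

section
/- Every symmetric and transitive relation P on a set A has a dagger splitting in Rel: letting B = {a ∈ A | P(a,a)} and e : A ⇸ B/∼ the relation sending a ∈ B to its equivalence class under the restriction of P to B, we have P = e° ∘ e and e ∘ e° = id on the set of equivalence classes. In particular every dagger idempotent in Rel(Set) dagger splits. -/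
/-- Every symmetric and transitive relation `P` (i.e. dagger idempotent in `Rel`) on a
set `A` has a dagger splitting in `Rel`: with `B = {a | P a a}` and `e : A ⇸ B/∼` the
relation sending `a ∈ B` to its equivalence class under the restriction of `P` to `B`,
one has `P = e° ∘ e` and `e ∘ e° = id`. -/
theorem stmt4 (A : Type*) (P : A → A → Prop)
    (hsym : ∀ a b, P a b → P b a) (htrans : ∀ a b c, P a b → P b c → P a c) :
    let B := {a : A // P a a}
    let r : B → B → Prop := fun x y => P x.1 y.1
    let e : A → Quot r → Prop := fun a q => ∃ h : P a a, q = Quot.mk r ⟨a, h⟩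
    (∀ a a' : A, P a a' ↔ ∃ q, e a q ∧ e a' q) ∧
    (∀ q q' : Quot r, (∃ a, e a q ∧ e a q') ↔ q = q') := by
  intro B r e
  have hexact : ∀ x y : B, Quot.mk r x = Quot.mk r y → r x y := by
    intro x y h
    have h2 := Quot.eqvGen_exact h
    clear h
    induction h2 with
    | rel a b hab => exact hab
    | refl a => exact a.2
    | symm a b _ ih => exact hsym _ _ ih
    | trans a b c _ _ ih1 ih2 => exact htrans _ _ _ ih1 ih2
  constructor
  · intro a a'
    constructor
    · intro h
      have ha : P a a := htrans _ _ _ h (hsym _ _ h)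
      have ha' : P a' a' := htrans _ _ _ (hsym _ _ h) h
      refine ⟨Quot.mk r ⟨a, ha⟩, ⟨ha, rfl⟩, ha', Quot.sound ?_⟩
      exact show P a a' from h
    · rintro ⟨q, ⟨h1, rfl⟩, ⟨h2, hq⟩⟩
      have : P a a' := hexact ⟨a, h1⟩ ⟨a', h2⟩ hq
      exact this
  · intro q q'
    constructor
    · rintro ⟨a, ⟨h1, rfl⟩, ⟨h2, rfl⟩⟩; rfl
    · rintro rfl
      induction q using Quot.ind with
      | _ x => exact ⟨x.1, ⟨x.2, by simp⟩, ⟨x.2, by simp⟩⟩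
end

section
/- Let A be a set and p : D → A a partial ternary operation (D ⊆ A³) which is dagger symmetric, i.e. p(x,y,z) = u ⇔ p(u,z,y) = x ⇔ p(y,x,u) = z, associative in the sense that p(p(x,y,z),u,v) = p(x,y,p(z,u,v)) whenever one side is defined, and normal: (∃y, p(x,y,y) = u) ⇔ x = u and (∃y, p(y,y,z) = u) ⇔ z = u. Then R and S defined by R(x,y) ⇔ (x,y,y) ∈ D and S(y,z) ⇔ (z,z,y) ∈ D are equivalence relations on A, and p is defined on (x,y,z) if and only if R(x,y) and S(y,z). -/
/-- Elementwise content of the correspondence between normal dagger Frobenius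
3-structures in `Rel(Set)` and connectors: for a single-valued, dagger symmetric,
associative, normal partial ternary operation (given as a relation `P x y z u` meaning
`p(x,y,z) = u`), the relations `R(x,y) ⇔ p(x,y,y) defined` and `S(y,z) ⇔ p(z,z,y) defined`
are equivalence relations, and `p(x,y,z)` is defined iff `R(x,y) ∧ S(y,z)`. -/
theorem stmt8 (A : Type*) (P : A → A → A → A → Prop)
    (hsv : ∀ x y z u u', P x y z u → P x y z u' → u = u')
    (hsym1 : ∀ x y z u, P x y z u ↔ P u z y x)
    (hsym2 : ∀ x y z u, P x y z u ↔ P y x u z)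
    (hassoc : ∀ x y z u v r,
      (∃ w, P x y z w ∧ P w u v r) ↔ (∃ w, P z u v w ∧ P x y w r))
    (hnorm1 : ∀ x u, (∃ y, P x y y u) ↔ x = u)
    (hnorm2 : ∀ z u, (∃ y, P y y z u) ↔ z = u) :
    Equivalence (fun x y : A => ∃ u, P x y y u) ∧
    Equivalence (fun y z : A => ∃ u, P z z y u) ∧
    (∀ x y z : A, (∃ u, P x y z u) ↔ ((∃ u, P x y y u) ∧ (∃ u, P z z y u))) := by
  have hR : ∀ x y u, P x y y u → P x y y x := by
    intro x y u h
    have hx := (hnorm1 x u).mp ⟨y, h⟩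
    subst hx; exact h
  have hS : ∀ y z u, P z z y u → P z z y y := by
    intro y z u h
    have hy := (hnorm2 y u).mp ⟨z, h⟩
    subst hy; exact h
  have idem : ∀ x, P x x x x := by
    intro x
    obtain ⟨y, hy⟩ := (hnorm1 x x).mpr rfl
    have hy' : P y x x y := (hsym2 x y y x).mp hy
    obtain ⟨w, hw1, hw2⟩ := (hassoc x y y x x x).mpr ⟨y, hy', hy⟩
    have hwx : w = x := hsv x y y w x hw1 hy
    subst hwx; exact hw2
  refine ⟨⟨fun x => ⟨x, idem x⟩, ?_, ?_⟩, ⟨fun y => ⟨y, idem y⟩, ?_, ?_⟩, ?_⟩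
  · -- R symm
    rintro x y ⟨u, h⟩
    exact ⟨y, (hsym2 x y y x).mp (hR x y u h)⟩
  · -- R trans
    rintro a b c ⟨u, h1⟩ ⟨v, h2⟩
    have h1' : P a b b a := hR a b u h1
    have h2' : P b c c b := hR b c v h2
    obtain ⟨w, hw1, hw2⟩ := (hassoc a b b c c a).mpr ⟨b, h2', h1'⟩
    have hwa : w = a := hsv a b b w a hw1 h1'
    subst hwa; exact ⟨w, hw2⟩
  · -- S symm
    rintro y z ⟨u, h⟩
    exact ⟨z, (hsym1 z z y y).mp (hS y z u h)⟩
  · -- S trans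
    rintro a b c ⟨u, h1⟩ ⟨v, h2⟩
    have h1' : P b b a a := hS a b u h1
    have h2' : P c c b b := hS b c v h2
    obtain ⟨w, hw1, hw2⟩ := (hassoc c c b b a a).mp ⟨b, h2', h1'⟩
    have hwa : a = w := (hnorm2 a w).mp ⟨b, hw1⟩
    subst hwa; exact ⟨a, hw2⟩
  · intro x y z
    constructor
    · rintro ⟨u, h⟩
      have hx : P u z y x := (hsym1 x y z u).mp h
      obtain ⟨w, hw1, hw2⟩ := (hassoc x y z z y x).mp ⟨u, h, hx⟩
      have hyw : y = w := (hnorm2 y w).mp ⟨z, hw1⟩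
      subst hyw
      exact ⟨⟨x, hw2⟩, ⟨y, hw1⟩⟩
    · rintro ⟨⟨u1, h1⟩, ⟨u2, h2⟩⟩
      have h1' : P x y y x := hR x y u1 h1
      have h2' : P z z y y := hS y z u2 h2
      obtain ⟨w, hw, -⟩ := (hassoc x y z z y x).mpr ⟨y, h2', h1'⟩
      exact ⟨w, hw⟩
end

section
/- Any Frobenius 3-structure (A, μ) in a monoidal category satisfies the ternary Frobenius law: the morphism δ ∘ μ : A ⊗ A* ⊗ A → A ⊗ A* ⊗ A equals both (id ⊗ id ⊗ μ) ∘ (δ ⊗ id ⊗ id) and (μ ⊗ id ⊗ id) ∘ (id ⊗ id ⊗ δ), where δ is the comultiplication of the 3-structure. -/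
open CategoryTheory MonoidalCategory

variable {C : Type*} [Category C] [MonoidalCategory C]

/-- Insert a cup `c' : 𝟙 ⟶ X ⊗ X'` to the left of `X`. -/
def tIns (X X' : C) (c' : 𝟙_ C ⟶ X ⊗ X') : X ⟶ X ⊗ (X' ⊗ X) :=
  (λ_ X).inv ≫ (c' ▷ X) ≫ (α_ X X' X).hom

/-- The comultiplication of a ternary multiplication `μ : X ⊗ X' ⊗ X ⟶ X` obtained by
bending the two right legs of `μ` using the cups `c : 𝟙 ⟶ X' ⊗ X`, `c' : 𝟙 ⟶ X ⊗ X'`. -/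
def tComulR (X X' : C) (c : 𝟙_ C ⟶ X' ⊗ X) (c' : 𝟙_ C ⟶ X ⊗ X')
    (μ : X ⊗ (X' ⊗ X) ⟶ X) : X ⟶ X ⊗ (X' ⊗ X) :=
  (ρ_ X).inv ≫ (X ◁ (c ≫ (X' ◁ tIns X X' c'))) ≫
    (X ◁ (α_ X' X (X' ⊗ X)).inv) ≫ (α_ X (X' ⊗ X) (X' ⊗ X)).inv ≫ (μ ▷ (X' ⊗ X))

/-- The comultiplication of `μ` obtained by bending the two left legs of `μ`. -/
def tComulL (X X' : C) (c : 𝟙_ C ⟶ X' ⊗ X) (c' : 𝟙_ C ⟶ X ⊗ X')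
    (μ : X ⊗ (X' ⊗ X) ⟶ X) : X ⟶ X ⊗ (X' ⊗ X) :=
  (λ_ X).inv ≫
    ((c' ≫ (X ◁ ((λ_ X').inv ≫ (c ▷ X') ≫ (α_ X' X X').hom))) ▷ X) ≫
    (α_ X (X' ⊗ (X ⊗ X')) X).hom ≫ (X ◁ (α_ X' (X ⊗ X') X).hom) ≫
    (X ◁ (X' ◁ (α_ X X' X).hom)) ≫ (X ◁ (X' ◁ μ))

/-- Associativity of a ternary multiplication: the two ways of applying `μ` twice to
`X ⊗ X' ⊗ X ⊗ X' ⊗ X` agree. -/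
def TernAssoc (X X' : C) (μ : X ⊗ (X' ⊗ X) ⟶ X) : Prop :=
  (X ◁ (α_ X' X (X' ⊗ X)).inv) ≫ (α_ X (X' ⊗ X) (X' ⊗ X)).inv ≫ (μ ▷ (X' ⊗ X)) ≫ μ =
    (X ◁ (X' ◁ μ)) ≫ μ

/-- Symmetry of a ternary multiplication: the comultiplications obtained by rotating
`μ` in the two directions agree. -/
def TernSymm (X X' : C) (c : 𝟙_ C ⟶ X' ⊗ X) (c' : 𝟙_ C ⟶ X ⊗ X')
    (μ : X ⊗ (X' ⊗ X) ⟶ X) : Prop :=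
  tComulR X X' c c' μ = tComulL X X' c c' μ

/-- Normality: the left and right loops of `μ` are identities. -/
def TernNormal (X X' : C) (c : 𝟙_ C ⟶ X' ⊗ X) (c' : 𝟙_ C ⟶ X ⊗ X')
    (μ : X ⊗ (X' ⊗ X) ⟶ X) : Prop :=
  tIns X X' c' ≫ μ = 𝟙 X ∧ (ρ_ X).inv ≫ (X ◁ c) ≫ μ = 𝟙 X

set_option maxHeartbeats 4000000 in
/-- The ternary Frobenius law: for any Frobenius 3-structure `(A, A*, μ)` with
comultiplication `δ`, the morphism `δ ∘ μ` equals both `(id ⊗ id ⊗ μ) ∘ (δ ⊗ id ⊗ id)`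
and `(μ ⊗ id ⊗ id) ∘ (id ⊗ id ⊗ δ)` (modulo associators). -/
theorem stmt11 (A A' : C) [ExactPairing A A'] [ExactPairing A' A]
    (μ : A ⊗ (A' ⊗ A) ⟶ A)
    (hassoc : TernAssoc A A' μ)
    (hsymm : TernSymm A A' (η_ A' A) (η_ A A') μ) :
    μ ≫ tComulR A A' (η_ A' A) (η_ A A') μ =
      (tComulR A A' (η_ A' A) (η_ A A') μ ▷ (A' ⊗ A)) ≫
        (α_ A (A' ⊗ A) (A' ⊗ A)).hom ≫ (A ◁ (α_ A' A (A' ⊗ A)).hom) ≫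
        (A ◁ (A' ◁ μ)) ∧
    μ ≫ tComulR A A' (η_ A' A) (η_ A A') μ =
      (A ◁ (A' ◁ tComulR A A' (η_ A' A) (η_ A A') μ)) ≫
        (A ◁ (α_ A' A (A' ⊗ A)).inv) ≫ (α_ A (A' ⊗ A) (A' ⊗ A)).inv ≫
        (μ ▷ (A' ⊗ A)) := by
  unfold TernAssoc at hassoc
  unfold TernSymm at hsymm
  constructor
  · have exch : μ ≫ (λ_ A).inv ≫
        ((η_ A A' ≫ (A ◁ ((λ_ A').inv ≫ (η_ A' A ▷ A') ≫ (α_ A' A A').hom))) ▷ A) =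
        (λ_ (A ⊗ (A' ⊗ A))).inv ≫
          ((η_ A A' ≫ (A ◁ ((λ_ A').inv ≫ (η_ A' A ▷ A') ≫ (α_ A' A A').hom))) ▷
            (A ⊗ (A' ⊗ A))) ≫ ((A ⊗ (A' ⊗ (A ⊗ A'))) ◁ μ) := by
      rw [leftUnitor_inv_naturality_assoc, ← whisker_exchange]
    calc μ ≫ tComulR A A' (η_ A' A) (η_ A A') μ
        = μ ≫ tComulL A A' (η_ A' A) (η_ A A') μ := by rw [hsymm]
      _ = (μ ≫ (λ_ A).inv ≫
            ((η_ A A' ≫ (A ◁ ((λ_ A').inv ≫ (η_ A' A ▷ A') ≫ (α_ A' A A').hom))) ▷ A)) ≫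
            (α_ A (A' ⊗ (A ⊗ A')) A).hom ≫ (A ◁ (α_ A' (A ⊗ A') A).hom) ≫
            (A ◁ (A' ◁ (α_ A A' A).hom)) ≫ (A ◁ (A' ◁ μ)) := by
          rw [tComulL]; simp only [Category.assoc]
      _ = ((λ_ (A ⊗ (A' ⊗ A))).inv ≫
            ((η_ A A' ≫ (A ◁ ((λ_ A').inv ≫ (η_ A' A ▷ A') ≫ (α_ A' A A').hom))) ▷
              (A ⊗ (A' ⊗ A))) ≫ ((A ⊗ (A' ⊗ (A ⊗ A'))) ◁ μ)) ≫
            (α_ A (A' ⊗ (A ⊗ A')) A).hom ≫ (A ◁ (α_ A' (A ⊗ A') A).hom) ≫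
            (A ◁ (A' ◁ (α_ A A' A).hom)) ≫ (A ◁ (A' ◁ μ)) := by rw [exch]
      _ = ((λ_ (A ⊗ (A' ⊗ A))).inv ≫
            ((η_ A A' ≫ (A ◁ ((λ_ A').inv ≫ (η_ A' A ▷ A') ≫ (α_ A' A A').hom))) ▷
              (A ⊗ (A' ⊗ A)))) ⊗≫
            (A ◁ (A' ◁ ((A ◁ (A' ◁ μ)) ≫ μ))) := by monoidal
      _ = ((λ_ (A ⊗ (A' ⊗ A))).inv ≫
            ((η_ A A' ≫ (A ◁ ((λ_ A').inv ≫ (η_ A' A ▷ A') ≫ (α_ A' A A').hom))) ▷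
              (A ⊗ (A' ⊗ A)))) ⊗≫
            (A ◁ (A' ◁ ((A ◁ (α_ A' A (A' ⊗ A)).inv) ≫ (α_ A (A' ⊗ A) (A' ⊗ A)).inv ≫
              (μ ▷ (A' ⊗ A)) ≫ μ))) := by rw [hassoc]
      _ = (tComulL A A' (η_ A' A) (η_ A A') μ ▷ (A' ⊗ A)) ≫
            (α_ A (A' ⊗ A) (A' ⊗ A)).hom ≫ (A ◁ (α_ A' A (A' ⊗ A)).hom) ≫
            (A ◁ (A' ◁ μ)) := by
          simp only [tComulL]; monoidal
      _ = (tComulR A A' (η_ A' A) (η_ A A') μ ▷ (A' ⊗ A)) ≫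
            (α_ A (A' ⊗ A) (A' ⊗ A)).hom ≫ (A ◁ (α_ A' A (A' ⊗ A)).hom) ≫
            (A ◁ (A' ◁ μ)) := by rw [hsymm]
  · have exch : μ ≫ (ρ_ A).inv ≫ (A ◁ (η_ A' A ≫ (A' ◁ tIns A A' (η_ A A')))) =
        (ρ_ (A ⊗ (A' ⊗ A))).inv ≫
          ((A ⊗ (A' ⊗ A)) ◁ (η_ A' A ≫ (A' ◁ tIns A A' (η_ A A')))) ≫
          (μ ▷ (A' ⊗ (A ⊗ (A' ⊗ A)))) := by
      rw [rightUnitor_inv_naturality_assoc, whisker_exchange]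
    calc μ ≫ tComulR A A' (η_ A' A) (η_ A A') μ
        = (μ ≫ (ρ_ A).inv ≫ (A ◁ (η_ A' A ≫ (A' ◁ tIns A A' (η_ A A'))))) ≫
            (A ◁ (α_ A' A (A' ⊗ A)).inv) ≫ (α_ A (A' ⊗ A) (A' ⊗ A)).inv ≫ (μ ▷ (A' ⊗ A)) := by
          rw [tComulR]; simp only [Category.assoc]
      _ = ((ρ_ (A ⊗ (A' ⊗ A))).inv ≫
            ((A ⊗ (A' ⊗ A)) ◁ (η_ A' A ≫ (A' ◁ tIns A A' (η_ A A')))) ≫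
            (μ ▷ (A' ⊗ (A ⊗ (A' ⊗ A))))) ≫
            (A ◁ (α_ A' A (A' ⊗ A)).inv) ≫ (α_ A (A' ⊗ A) (A' ⊗ A)).inv ≫ (μ ▷ (A' ⊗ A)) := by
          rw [exch]
      _ = ((ρ_ (A ⊗ (A' ⊗ A))).inv ≫
            ((A ⊗ (A' ⊗ A)) ◁ (η_ A' A ≫ (A' ◁ tIns A A' (η_ A A'))))) ⊗≫
            (((A ◁ (α_ A' A (A' ⊗ A)).inv) ≫ (α_ A (A' ⊗ A) (A' ⊗ A)).inv ≫
              (μ ▷ (A' ⊗ A)) ≫ μ) ▷ (A' ⊗ A)) := by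
          simp only [tIns]; monoidal
      _ = ((ρ_ (A ⊗ (A' ⊗ A))).inv ≫
            ((A ⊗ (A' ⊗ A)) ◁ (η_ A' A ≫ (A' ◁ tIns A A' (η_ A A'))))) ⊗≫
            (((A ◁ (A' ◁ μ)) ≫ μ) ▷ (A' ⊗ A)) := by rw [hassoc]
      _ = (A ◁ (A' ◁ tComulR A A' (η_ A' A) (η_ A A') μ)) ≫
          (A ◁ (α_ A' A (A' ⊗ A)).inv) ≫ (α_ A (A' ⊗ A) (A' ⊗ A)).inv ≫
          (μ ▷ (A' ⊗ A)) := by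
          simp only [tComulR, tIns]; monoidal
end

section
/- Let A be a set with partial ternary operation p that is a totally-defined connector on equivalence relations R, S (so p : {(x,y,z) | R(x,y) ∧ S(y,z)} → A with the connector axioms). Define the relation l on pairs by (y,z) l (x,u) ⇔ p(x,y,z) = u. Then l, restricted to S = {(y,z) | S(y,z)}, is an equivalence relation, and the quotient carries a groupoid structure: equivalence classes [x,y] compose by [x,y] ∘ [y,z] = [x,z], which is well-defined, associative, has identities [x,x], and inverses [x,y]⁻¹ = [y,x]. -/
/-- Given a connector `p` on `A` between equivalence relations `R`, `S`, the relation
`(y,z) l (x,u) ⇔ p(x,y,z) = u` restricted to `S = {(y,z) | S y z}` is an equivalence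
relation, and the quotient carries a groupoid structure: composition of classes
`[x,y] ∘ [y,z] = [x,z]` is well-defined (independent of representatives), and taking
inverses `[x,y]⁻¹ = [y,x]` is likewise well-defined. -/
theorem stmt19 (A : Type*) (R S : A → A → Prop)
    (hR : Equivalence R) (hS : Equivalence S)
    (p : ∀ x y z : A, R x y → S y z → A)
    (hp1 : ∀ (x y : A) (hxy : R x y) (hyy : S y y), p x y y hxy hyy = x)
    (hp2 : ∀ (y z : A) (hyy : R y y) (hyz : S y z), p y y z hyy hyz = z)
    (hSp : ∀ (x y z : A) (hxy : R x y) (hyz : S y z), S x (p x y z hxy hyz))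
    (hRp : ∀ (x y z : A) (hxy : R x y) (hyz : S y z), R z (p x y z hxy hyz))
    (hassoc : ∀ (x y z u v : A) (hxy : R x y) (hyz : S y z)
      (h₁ : R (p x y z hxy hyz) u) (h₂ : S u v) (h₃ : R z u) (h₄ : R x y)
      (h₅ : S y (p z u v h₃ h₂)),
      p (p x y z hxy hyz) u v h₁ h₂ = p x y (p z u v h₃ h₂) h₄ h₅) :
    let SP := {q : A × A // S q.1 q.2}
    let lrel : SP → SP → Prop := fun q q' =>
      ∃ (hr : R q'.1.1 q.1.1) (hs : S q.1.1 q.1.2),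
        p q'.1.1 q.1.1 q.1.2 hr hs = q'.1.2
    -- (1) `l` restricted to `S` is an equivalence relation
    Equivalence lrel ∧
    -- (2) the composition `[x,y] ∘ [y,z] = [x,z]` is well-defined on `l`-classes
    (∀ (x y z x' y' z' : A) (hxy : S x y) (hyz : S y z) (hxz : S x z)
       (hxy' : S x' y') (hyz' : S y' z') (hxz' : S x' z'),
      lrel ⟨(x, y), hxy⟩ ⟨(x', y'), hxy'⟩ →
      lrel ⟨(y, z), hyz⟩ ⟨(y', z'), hyz'⟩ →
      lrel ⟨(x, z), hxz⟩ ⟨(x', z'), hxz'⟩) ∧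
    -- (3) the inverse `[x,y]⁻¹ = [y,x]` is well-defined on `l`-classes
    (∀ (x y x' y' : A) (hxy : S x y) (hyx : S y x) (hxy' : S x' y') (hyx' : S y' x'),
      lrel ⟨(x, y), hxy⟩ ⟨(x', y'), hxy'⟩ →
      lrel ⟨(y, x), hyx⟩ ⟨(y', x'), hyx'⟩) := by
  intro SP lrel
  have pcong : ∀ (a a' b c : A) (ha : R a b) (hb : S b c) (ha' : R a' b),
      a = a' → p a b c ha hb = p a' b c ha' hb := by
    intro a a' b c ha hb ha' h
    subst h; rfl
  refine ⟨⟨?_, ?_, ?_⟩, ?_, ?_⟩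
  · -- reflexivity
    rintro ⟨⟨y, z⟩, hyz⟩
    exact ⟨hR.refl y, hyz, hp2 y z (hR.refl y) hyz⟩
  · -- symmetry
    rintro ⟨⟨y, z⟩, hyz⟩ ⟨⟨x, u⟩, hxu⟩ ⟨hr, hs, heq⟩
    dsimp only at hr hs heq hyz hxu ⊢
    subst heq
    refine ⟨hR.symm hr, hxu, ?_⟩
    have h₁ : R (p y x x (hR.symm hr) (hS.refl x)) y := by
      rw [hp1]; exact hR.refl y
    have h := hassoc y x x y z (hR.symm hr) (hS.refl x) h₁ hs hr (hR.symm hr)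
      (hSp x y z hr hs)
    simp only [hp1, hp2] at h
    exact h.symm
  · -- transitivity
    rintro ⟨⟨y, z⟩, hyz⟩ ⟨⟨x, u⟩, hxu⟩ ⟨⟨w, v⟩, hwv⟩ ⟨hr1, hs1, heq1⟩ ⟨hr2, hs2, heq2⟩
    dsimp only at hr1 hs1 heq1 hr2 hs2 heq2 hyz hxu hwv ⊢
    subst heq1
    subst heq2
    refine ⟨hR.trans hr2 hr1, hs1, ?_⟩
    have h₁ : R (p w x x hr2 (hS.refl x)) y := by
      rw [hp1]; exact hR.trans hr2 hr1
    have h := hassoc w x x y z hr2 (hS.refl x) h₁ hs1 hr1 hr2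
      (hSp x y z hr1 hs1)
    simp only [hp1, hp2] at h
    exact h
  · -- composition well-defined
    rintro x y z x' y' z' hxy hyz hxz hxy' hyz' hxz' ⟨hr1, hs1, heq1⟩ ⟨hr2, hs2, heq2⟩
    dsimp only at hr1 hs1 heq1 hr2 hs2 heq2
    refine ⟨hr1, hxz, ?_⟩
    have h₁ : R (p x' x y hr1 hs1) y := by
      rw [heq1]; exact hr2
    have h₅ : S x (p y y z (hR.refl y) hyz) := by
      rw [hp2]; exact hxz
    have h := hassoc x' x y y z hr1 hs1 h₁ hyz (hR.refl y) hr1 h₅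
    simp only [hp2] at h
    calc p x' x z hr1 hxz = p (p x' x y hr1 hs1) y z h₁ hyz := h.symm
      _ = p y' y z hr2 hyz := pcong _ _ _ _ _ _ _ heq1
      _ = z' := heq2
  · -- inverse well-defined
    rintro x y x' y' hxy hyx hxy' hyx' ⟨hr, hs, heq⟩
    dsimp only at hr hs heq
    have hr' : R y' y := by
      rw [← heq]; exact hR.symm (hRp x' x y hr hs)
    refine ⟨hr', hyx, ?_⟩
    have h₁ : R (p x' x y hr hs) y := by
      rw [heq]; exact hr'
    have h₅ : S x (p y y x (hR.refl y) hyx) := by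
      rw [hp2]; exact hS.refl x
    have h := hassoc x' x y y x hr hs h₁ hyx (hR.refl y) hr h₅
    simp only [hp1, hp2] at h
    calc p y' y x hr' hyx = p (p x' x y hr hs) y x h₁ hyx :=
        pcong _ _ _ _ _ _ _ heq.symm
      _ = x' := h
end
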